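/- arXiv:1809.06271 — 6 statements merged into one kernel-verified Lean document; each statement's English description precedes it below -/
import Mathlib

section
/- Let H ∈ F_q[X,Y] be a nonzero polynomial and let T be the tangent cone of H at the origin. If there exists a homogeneous linear polynomial L ∈ F_q[X,Y] such that L divides T but L^2 does not divide T (a reduced linear factor of T over F_q), then H has an absolutely irreducible factor over F_q. -/
open MvPolynomial

noncomputable section

/-- The smallest total degree of a monomial occurring in `P`. -/
def minMonomialDeg {K : Type*} [Field K] (P : MvPolynomial (Fin 2) K) : ℕ :=
  sInf {m : ℕ | ∃ s ∈ P.support, (s.sum fun _ e => e) = m}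

/-- The tangent cone of `P` at the origin: the nonzero homogeneous component of
lowest total degree (for `P ≠ 0`). -/
def tangentCone {K : Type*} [Field K] (P : MvPolynomial (Fin 2) K) : MvPolynomial (Fin 2) K :=
  homogeneousComponent (minMonomialDeg P) P

/-- `P ∈ F_q[X,Y]` has a factor of positive degree that is absolutely irreducible,
i.e. irreducible over an algebraic closure of `F_q`. -/
def HasAbsIrrFactor {K : Type*} [Field K] (P : MvPolynomial (Fin 2) K) : Prop :=
  ∃ Q : MvPolynomial (Fin 2) K, Q ∣ P ∧ 0 < Q.totalDegree ∧
    Irreducible (MvPolynomial.map (algebraMap K (AlgebraicClosure K)) Q)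

/-!
Factor `H` into irreducibles over `K`. The tangent cone is multiplicative (it is the trailing
coefficient of `P(t • X)` viewed as a polynomial in `t`), so the prime `L` divides the tangent
cone of some irreducible factor `P`, and `L ^ 2` still does not. Over the algebraic closure pick an
irreducible factor `Q` of `P` whose tangent cone is divisible by `L`. A Galois conjugate of `Q`
not associated to `Q` would also divide `P`, together with `Q`, and make `L ^ 2` divide the
tangent cone of `P`; divisibility descends from `K̄[X, Y]` to `K[X, Y]` because the former is
free over the latter. Hence `Q` is associated to its conjugates, so, suitably scaled, it is
defined over `K`, and irreducibility of `P` forces `P` to be associated to `Q` over `K̄`.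
-/

namespace MvPolynomial

section Graded

variable {σ R : Type*} [CommSemiring R]

/-- `P(t • X)`, as a polynomial in `t`. -/
def gradedPolynomial : MvPolynomial σ R →+* Polynomial (MvPolynomial σ R) :=
  eval₂Hom (Polynomial.C.comp C) fun i => Polynomial.C (X i) * Polynomial.X

lemma gradedPolynomial_monomial (s : σ →₀ ℕ) (c : R) :
    gradedPolynomial (monomial s c) = Polynomial.C (monomial s c) * Polynomial.X ^ s.degree := by
  rw [gradedPolynomial, eval₂Hom_monomial, Finsupp.prod]
  simp only [mul_pow, ← Polynomial.C_pow]
  rw [Finset.prod_mul_distrib, ← map_prod, Finset.prod_pow_eq_pow_sum, monomial_eq,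
    Finsupp.prod, Finsupp.degree_apply, map_mul]
  simp only [RingHom.coe_comp, Function.comp_apply]
  ring

lemma coeff_gradedPolynomial (P : MvPolynomial σ R) (n : ℕ) :
    (gradedPolynomial P).coeff n = homogeneousComponent n P := by
  induction P using MvPolynomial.induction_on' with
  | add p q hp hq => simp [hp, hq]
  | monomial s c =>
    ext u
    classical
    rw [gradedPolynomial_monomial, Polynomial.coeff_C_mul_X_pow, coeff_homogeneousComponent,
      apply_ite (coeff u), coeff_zero, coeff_monomial]
    split_ifs <;> grind

lemma homogeneousComponent_ne_zero_iff {n : ℕ} {P : MvPolynomial σ R} :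
    homogeneousComponent n P ≠ 0 ↔ ∃ s ∈ P.support, s.degree = n := by
  simp only [ne_eq, MvPolynomial.ext_iff, coeff_homogeneousComponent, coeff_zero, not_forall,
    mem_support_iff]
  grind

end Graded

lemma homogeneousComponent_map {σ R S : Type*} [CommSemiring R] [CommSemiring S] (f : R →+* S)
    (n : ℕ) (P : MvPolynomial σ R) :
    homogeneousComponent n (map f P) = map f (homogeneousComponent n P) := by
  ext u
  rw [coeff_homogeneousComponent, coeff_map, coeff_map, coeff_homogeneousComponent,
    apply_ite f, map_zero]

lemma prime_of_isHomogeneous_one {σ K : Type*} [Field K] {L : MvPolynomial σ K}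
    (hL : L.IsHomogeneous 1) (hL0 : L ≠ 0) : Prime L := by
  refine (irreducible_of_totalDegree_eq_one (hL.totalDegree hL0) fun x hx => ?_).prime
  obtain ⟨s, hs⟩ := exists_coeff_ne_zero hL0
  exact isUnit_iff_ne_zero.mpr (by rintro rfl; exact hs (zero_dvd_iff.mp (hx s)))

lemma totalDegree_pos_of_irreducible {σ K : Type*} [Field K] {P : MvPolynomial σ K}
    (hP : Irreducible P) : 0 < P.totalDegree := by
  refine Nat.pos_of_ne_zero fun h => hP.not_isUnit ?_
  refine isUnit_iff_totalDegree_of_isReduced.mpr ⟨isUnit_iff_ne_zero.mpr fun h0 => ?_, h⟩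
  exact hP.ne_zero (by rw [totalDegree_eq_zero_iff_eq_C.mp h, h0, map_zero])

attribute [local instance] algebraMvPolynomial in
theorem map_dvd_map_iff {σ K K' : Type*} [Field K] [CommRing K'] [Nontrivial K']
    [Algebra K K'] {A F : MvPolynomial σ K} :
    map (algebraMap K K') A ∣ map (algebraMap K K') F ↔ A ∣ F := by
  refine ⟨fun h => ?_, map_dvd _⟩
  have : Module.Free (MvPolynomial σ K) (MvPolynomial σ K') :=
    (Algebra.IsPushout.out (R := K) (S := MvPolynomial σ K) (R' := K')
      (S' := MvPolynomial σ K')).free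
  have key := Ideal.comap_map_eq_self_of_faithfullyFlat (B := MvPolynomial σ K')
    (Ideal.span {A})
  rwa [← Ideal.mem_span_singleton, ← key, Ideal.mem_comap, Ideal.map_span, Set.image_singleton,
    Ideal.mem_span_singleton]

section Galois

variable {σ K K' : Type*} [Field K] [Field K'] [Algebra K K']

lemma eq_of_associated_of_coeff_eq {P Q : MvPolynomial σ K} (h : Associated P Q)
    {s : σ →₀ ℕ} (hs : coeff s P = coeff s Q) (hQ : coeff s Q ≠ 0) : P = Q := by
  obtain ⟨u, rfl⟩ := h
  obtain ⟨c, -, hc⟩ := isUnit_iff_eq_C_of_isReduced.mp u.isUnit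
  rw [hc, mul_comm, coeff_C_mul] at hs hQ
  rw [hc, (mul_eq_right₀ (right_ne_zero_of_mul hQ)).mp hs.symm, C_1, mul_one]

variable [IsGalois K K']

lemma mem_range_map_of_forall_map_eq {Q : MvPolynomial σ K'}
    (h : ∀ g : Gal(K'/K), map (g : K' →+* K') Q = Q) :
    Q ∈ Set.range (map (algebraMap K K')) := by
  rw [mem_range_map_iff_coeffs_subset]
  intro c hc
  obtain ⟨s, -, rfl⟩ := mem_coeffs_iff.mp hc
  exact (InfiniteGalois.mem_range_algebraMap_iff_fixed _).mpr fun g =>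
    (coeff_map _ _ _).symm.trans congr(coeff s $(h g))

lemma exists_map_associated_of_forall_associated {Q : MvPolynomial σ K'}
    (h : ∀ g : Gal(K'/K), Associated (map (g : K' →+* K') Q) Q) :
    ∃ Q₀ : MvPolynomial σ K, Associated (map (algebraMap K K') Q₀) Q := by
  rcases eq_or_ne Q 0 with rfl | hQ
  · exact ⟨0, by simp⟩
  obtain ⟨s, hs⟩ := exists_coeff_ne_zero hQ
  set Q' := C (coeff s Q)⁻¹ * Q
  have hQ' : Associated Q' Q :=
    associated_unit_mul_left _ _ ((isUnit_iff_ne_zero.mpr (inv_ne_zero hs)).map C)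
  have hs' : coeff s Q' = 1 := by simp [Q', hs]
  have hfix : ∀ g : Gal(K'/K), map (g : K' →+* K') Q' = Q' := by
    intro g
    have hg : Associated (map (g : K' →+* K') Q') Q' :=
      ((hQ'.map (map (g : K' →+* K'))).trans (h g)).trans hQ'.symm
    refine eq_of_associated_of_coeff_eq hg (s := s) ?_ ?_
    · rw [coeff_map, hs', map_one]
    · exact hs'.symm ▸ one_ne_zero
  obtain ⟨Q₀, hQ₀⟩ := mem_range_map_of_forall_map_eq hfix
  exact ⟨Q₀, hQ₀ ▸ hQ'⟩

end Galois

end MvPolynomial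

lemma Polynomial.sInf_setOf_coeff_ne_zero {R : Type*} [Semiring R] (p : Polynomial R) :
    sInf {n | p.coeff n ≠ 0} = p.natTrailingDegree := by
  rcases eq_or_ne p 0 with rfl | hp
  · simp
  have htrail : p.coeff p.natTrailingDegree ≠ 0 :=
    Polynomial.trailingCoeff_nonzero_iff_nonzero.mpr hp
  exact le_antisymm (Nat.sInf_le htrail) (Polynomial.natTrailingDegree_le_of_ne_zero
    (Nat.sInf_mem (s := {n | p.coeff n ≠ 0}) ⟨_, htrail⟩))

section TangentCone

variable {K : Type*} [Field K]

lemma minMonomialDeg_eq_natTrailingDegree (P : MvPolynomial (Fin 2) K) :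
    minMonomialDeg P = (gradedPolynomial P).natTrailingDegree := by
  rw [← Polynomial.sInf_setOf_coeff_ne_zero, minMonomialDeg]
  congr 1
  ext n
  rw [Set.mem_ofPred, Set.mem_ofPred, coeff_gradedPolynomial, homogeneousComponent_ne_zero_iff]
  rfl

lemma tangentCone_eq_trailingCoeff (P : MvPolynomial (Fin 2) K) :
    tangentCone P = (gradedPolynomial P).trailingCoeff := by
  rw [tangentCone, minMonomialDeg_eq_natTrailingDegree, Polynomial.trailingCoeff,
    coeff_gradedPolynomial]

def tangentConeHom : MvPolynomial (Fin 2) K →*₀ MvPolynomial (Fin 2) K where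
  toFun := tangentCone
  map_zero' := by simp [tangentCone_eq_trailingCoeff]
  map_one' := by simp [tangentCone_eq_trailingCoeff, Polynomial.trailingCoeff]
  map_mul' P Q := by simp [tangentCone_eq_trailingCoeff, Polynomial.trailingCoeff_mul]

@[simp]
lemma tangentConeHom_apply (P : MvPolynomial (Fin 2) K) : tangentConeHom P = tangentCone P := rfl

lemma tangentCone_map {K' : Type*} [Field K'] (f : K →+* K') (P : MvPolynomial (Fin 2) K) :
    tangentCone (map f P) = map f (tangentCone P) := by
  rw [tangentCone, tangentCone, minMonomialDeg, support_map_of_injective _ f.injective,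
    ← minMonomialDeg, homogeneousComponent_map]

lemma exists_irreducible_dvd_of_prime_dvd_tangentCone {A L : MvPolynomial (Fin 2) K}
    (hA : A ≠ 0) (hL : Prime L) (h : L ∣ tangentCone A) :
    ∃ Q, Irreducible Q ∧ Q ∣ A ∧ L ∣ tangentCone Q := by
  induction A using UniqueFactorizationMonoid.induction_on_prime with
  | h₁ => exact absurd rfl hA
  | h₂ u hu => exact absurd (isUnit_of_dvd_unit h (hu.map tangentConeHom)) hL.not_isUnit
  | h₃ a p ha hp ih =>
    rw [← tangentConeHom_apply, map_mul] at h
    rcases hL.dvd_or_dvd h with hp' | ha'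
    · exact ⟨p, hp.irreducible, dvd_mul_right p a, hp'⟩
    · obtain ⟨Q, hQ, hQa, hLQ⟩ := ih ha ha'
      exact ⟨Q, hQ, hQa.mul_left p, hLQ⟩

variable {K' : Type*} [Field K'] [Algebra K K']

lemma associated_map_algEquiv_of_dvd_map {P L : MvPolynomial (Fin 2) K}
    {Q : MvPolynomial (Fin 2) K'} (g : K' ≃ₐ[K] K') (hnotdvd : ¬ L ^ 2 ∣ tangentCone P)
    (hQ : Irreducible Q) (hQP : Q ∣ map (algebraMap K K') P)
    (hLQ : map (algebraMap K K') L ∣ tangentCone Q) :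
    Associated (map (g : K' →+* K') Q) Q := by
  have hfix : ∀ A : MvPolynomial (Fin 2) K,
      map (g : K' →+* K') (map (algebraMap K K') A) = map (algebraMap K K') A := fun A => by
    rw [map_map, show (g : K' →+* K').comp (algebraMap K K') = algebraMap K K' from
      RingHom.ext g.commutes]
  have hgQ : Irreducible (map (g : K' →+* K') Q) :=
    (MulEquiv.irreducible_iff (mapEquiv (Fin 2) g.toRingEquiv).toMulEquiv).mpr hQ
  by_contra hne
  obtain ⟨M, hM⟩ := hQP
  have hgQM : map (g : K' →+* K') Q ∣ M := by
    have hgQP : map (g : K' →+* K') Q ∣ Q * M := hM ▸ hfix P ▸ map_dvd _ ⟨M, hM⟩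
    exact (hgQ.prime.dvd_or_dvd hgQP).resolve_left fun h => hne (hgQ.associated_of_dvd hQ h)
  have hLgQ : map (algebraMap K K') L ∣ tangentCone (map (g : K' →+* K') Q) := by
    rw [tangentCone_map, ← hfix L]
    exact map_dvd _ hLQ
  have hL2 : map (algebraMap K K') L ^ 2 ∣ tangentCone (map (algebraMap K K') P) := by
    rw [hM, ← tangentConeHom_apply, map_mul, sq]
    exact mul_dvd_mul hLQ (hLgQ.trans (map_dvd tangentConeHom hgQM))
  rw [tangentCone_map, ← map_pow, map_dvd_map_iff] at hL2
  exact hnotdvd hL2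

theorem irreducible_map_of_reduced_linear_factor [IsGalois K K'] {P L : MvPolynomial (Fin 2) K}
    (hP : Irreducible P) (hL : L.IsHomogeneous 1) (hL0 : L ≠ 0) (hdvd : L ∣ tangentCone P)
    (hnotdvd : ¬ L ^ 2 ∣ tangentCone P) : Irreducible (map (algebraMap K K') P) := by
  have hinj : Function.Injective (map (σ := Fin 2) (algebraMap K K')) :=
    map_injective _ (algebraMap K K').injective
  have hLK' : Prime (map (algebraMap K K') L) :=
    prime_of_isHomogeneous_one (hL.map _) ((map_ne_zero_iff _ hinj).mpr hL0)
  have hPK' : map (algebraMap K K') P ≠ 0 := (map_ne_zero_iff _ hinj).mpr hP.ne_zero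
  obtain ⟨Q, hQ, hQP, hLQ⟩ := exists_irreducible_dvd_of_prime_dvd_tangentCone hPK' hLK'
    (tangentCone_map (algebraMap K K') P ▸ map_dvd _ hdvd)
  obtain ⟨Q₀, hQ₀⟩ := exists_map_associated_of_forall_associated fun g =>
    associated_map_algEquiv_of_dvd_map g hnotdvd hQ hQP hLQ
  obtain ⟨B, hB⟩ := map_dvd_map_iff.mp (hQ₀.dvd.trans hQP)
  rcases hP.isUnit_or_isUnit hB with hQ₀u | hBu
  · exact absurd (hQ₀.isUnit_iff.mp (hQ₀u.map (map (algebraMap K K')))) hQ.not_isUnit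
  · refine (hQ₀.symm.trans ?_).irreducible hQ
    rw [hB]
    exact (associated_mul_unit_right Q₀ B hBu).map (map (algebraMap K K'))

end TangentCone

theorem reduced_linear_factor_of_tangent_cone
    {K : Type*} [Field K] [Fintype K]
    (H : MvPolynomial (Fin 2) K) (hH : H ≠ 0)
    (L : MvPolynomial (Fin 2) K) (hL0 : L ≠ 0) (hLlin : L.IsHomogeneous 1)
    (hdvd : L ∣ tangentCone H) (hnotdvd : ¬ L ^ 2 ∣ tangentCone H) :
    HasAbsIrrFactor H := by
  obtain ⟨P, hP, hPH, hLP⟩ :=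
    exists_irreducible_dvd_of_prime_dvd_tangentCone hH (prime_of_isHomogeneous_one hLlin hL0) hdvd
  exact ⟨P, hPH, totalDegree_pos_of_irreducible hP,
    irreducible_map_of_reduced_linear_factor hP hLlin hL0 hLP
      fun h => hnotdvd (h.trans (map_dvd tangentConeHom hPH))⟩
end
end

section
/- Assume the Section 3 setup, and let u be the least nonnegative integer such that the tangent cone of F_{t-1} contains a monomial X^{2^u}Y^ℓ for some ℓ ≥ 0. Then for every r with 1 ≤ r ≤ t, the number 2^u divides n_r. -/
open MvPolynomial

noncomputable section

/-!
Write `M_r = n_1 + ⋯ + n_r` (`orderSum`). The substitution `X ↦ XY` followed by division by `Y^(n_r)`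
sends a monomial `X^a Y^c` of `F_0` to `X^a Y^(ra + c - M_r)` in `F_r`, so `M_r` is the minimum
of `ra + c` over the support of `F_0`, the tangent cone of `F_(r-1)` consists of the monomials
at which this minimum is attained, and `r ↦ n_r` is antitone.

In characteristic 2 the monomials of `F_0` with `Y`-degree `c = d - i` and positive `X`-degree
are the `X^a` with `binom(i-1, a)` even. By Lucas's theorem the least such `a` is `2^z`, where
`2^z` is the exact power of 2 dividing `i`; here `i` is not a power of 2, since `A_i ≠ 0`.
While `X` divides the tangent cone, `M_r` is therefore attained at such a point `X^(2^z) Y^c`,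
so `M_r = r 2^z + c ≡ d` modulo `2^z`. The definition of `u` gives `u ≤ z` (at `r = t` directly,
for `r < t` via `2^u ≤ n_t ≤ n_(r+1) ≤ 2^z`), and the row `c = 0` gives `2^u ∣ d` in the same way.
So `2^u` divides every `M_r`, and hence every `n_r = M_r - M_(r-1)`.
-/

namespace Nat

lemma choose_two_mul_add_one_mod_two (n k : ℕ) :
    (2 * n + 1).choose k % 2 = n.choose (k / 2) % 2 := by
  have h := Choose.choose_modEq_choose_mod_mul_choose_div_nat (p := 2) (n := 2 * n + 1) (k := k)
  have hchoose : choose 1 (k % 2) = 1 := by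
    rcases Nat.mod_two_eq_zero_or_one k with h | h <;> simp [h]
  rwa [show (2 * n + 1) % 2 = 1 by omega, show (2 * n + 1) / 2 = n by omega, hchoose,
    one_mul] at h

lemma two_pow_succ_mul_sub_one (z m : ℕ) (hm : 0 < m) :
    2 ^ (z + 1) * m - 1 = 2 * (2 ^ z * m - 1) + 1 := by
  have : 0 < 2 ^ z * m := Nat.mul_pos (Nat.two_pow_pos z) hm
  rw [pow_succ, mul_right_comm]
  omega

lemma not_two_dvd_choose_two_pow_mul_odd_sub_one {z m k : ℕ} (hm : Odd m) (hk : k < 2 ^ z) :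
    ¬ 2 ∣ (2 ^ z * m - 1).choose k := by
  induction z generalizing k with
  | zero =>
    obtain rfl : k = 0 := by simpa using hk
    simp
  | succ z ih =>
    rw [two_pow_succ_mul_sub_one z m hm.pos, Nat.dvd_iff_mod_eq_zero,
      choose_two_mul_add_one_mod_two, ← Nat.dvd_iff_mod_eq_zero]
    exact ih (by rw [pow_succ] at hk; omega)

lemma two_dvd_choose_two_pow_mul_odd_sub_one {z m : ℕ} (hm : Odd m) :
    2 ∣ (2 ^ z * m - 1).choose (2 ^ z) := by
  induction z with
  | zero =>
    obtain ⟨j, rfl⟩ := hm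
    simp
  | succ z ih =>
    rw [two_pow_succ_mul_sub_one z m hm.pos, Nat.dvd_iff_mod_eq_zero,
      choose_two_mul_add_one_mod_two, pow_succ, Nat.mul_div_cancel _ two_pos,
      ← Nat.dvd_iff_mod_eq_zero]
    exact ih

end Nat

section Blowup

variable {R : Type*} [CommSemiring R]

def expXY (a b : ℕ) : Fin 2 →₀ ℕ := Finsupp.single 0 a + Finsupp.single 1 b

@[simp] lemma expXY_apply_zero (a b : ℕ) : expXY a b 0 = a := by simp [expXY]

@[simp] lemma expXY_apply_one (a b : ℕ) : expXY a b 1 = b := by simp [expXY]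

lemma expXY_apply_zero_apply_one (s : Fin 2 →₀ ℕ) : expXY (s 0) (s 1) = s := by
  ext i; fin_cases i <;> simp

@[simp] lemma expXY_inj {a b a' b' : ℕ} : expXY a b = expXY a' b' ↔ a = a' ∧ b = b' :=
  ⟨fun h => ⟨by simpa using congr($h 0), by simpa using congr($h 1)⟩,
    fun ⟨ha, hb⟩ => ha ▸ hb ▸ rfl⟩

@[simp] lemma degree_expXY (a b : ℕ) : (expXY a b).degree = a + b := by
  simp [expXY]

lemma expXY_add_single_one (a b c : ℕ) : expXY a b + Finsupp.single 1 c = expXY a (b + c) := by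
  simp [expXY, add_assoc]

def blowup : MvPolynomial (Fin 2) R →ₐ[R] MvPolynomial (Fin 2) R := aeval ![X 0 * X 1, X 1]

lemma blowup_monomial (s : Fin 2 →₀ ℕ) (r : R) :
    blowup (monomial s r) = monomial (expXY (s 0) (s 0 + s 1)) r := by
  rw [blowup, aeval_monomial, Finsupp.prod_fintype _ _ fun _ => pow_zero _, Fin.prod_univ_two]
  simp only [Matrix.cons_val_zero, Matrix.cons_val_one, mul_pow,
    X_pow_eq_monomial, monomial_mul, algebraMap_eq, C_mul_monomial, mul_one]
  congr 1
  simp [expXY, add_assoc]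

lemma coeff_blowup (P : MvPolynomial (Fin 2) R) (a c : ℕ) :
    coeff (expXY a c) (blowup P) = if a ≤ c then coeff (expXY a (c - a)) P else 0 := by
  induction P using MvPolynomial.induction_on' with
  | monomial s r =>
    rw [blowup_monomial, coeff_monomial, ← expXY_apply_zero_apply_one s, coeff_monomial]
    simp only [expXY_apply_zero, expXY_apply_one, expXY_inj]
    split_ifs <;> first | rfl | omega
  | add P Q hP hQ => simp only [map_add, coeff_add, hP, hQ]; split_ifs <;> simp

lemma coeff_mul_X_one_pow (P : MvPolynomial (Fin 2) R) (n a b : ℕ) :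
    coeff (expXY a (b + n)) (P * X 1 ^ n) = coeff (expXY a b) P := by
  rw [X_pow_eq_monomial, ← expXY_add_single_one, coeff_mul_monomial, mul_one]

lemma mem_support_iff_of_mul_X_one_pow_eq_blowup {P Q : MvPolynomial (Fin 2) R} {n : ℕ}
    (h : Q * X 1 ^ n = blowup P) (a b : ℕ) :
    expXY a b ∈ Q.support ↔ ∃ c, expXY a c ∈ P.support ∧ a + c = b + n := by
  rw [mem_support_iff, ← coeff_mul_X_one_pow Q n, h, coeff_blowup]
  constructor
  · intro hne
    split_ifs at hne with hab
    · exact ⟨b + n - a, mem_support_iff.mpr hne, by omega⟩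
    · exact absurd rfl hne
  · rintro ⟨c, hc, hsum⟩
    rw [if_pos (by omega), show b + n - a = c by omega]
    exact mem_support_iff.mp hc

lemma coeff_expXY_zero_eq_zero_of_X_zero_dvd {P : MvPolynomial (Fin 2) R} (h : X 0 ∣ P) (b : ℕ) :
    coeff (expXY 0 b) P = 0 := by
  classical
  obtain ⟨Q, rfl⟩ := h
  rw [coeff_X_mul', if_neg (by simp)]

end Blowup

section BlowupSeq

variable {K : Type*} [Field K]

def IsBlowupSeq (F : ℕ → MvPolynomial (Fin 2) K) (n : ℕ → ℕ) : Prop :=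
  ∀ r, IsLeast {m | ∃ s ∈ (F r).support, s.degree = m} (n (r + 1)) ∧
    F (r + 1) * X 1 ^ n (r + 1) = blowup (F r)

def orderSum (n : ℕ → ℕ) (r : ℕ) : ℕ := ∑ j ∈ Finset.range r, n (j + 1)

@[simp] lemma orderSum_zero (n : ℕ → ℕ) : orderSum n 0 = 0 := rfl

lemma orderSum_succ (n : ℕ → ℕ) (r : ℕ) : orderSum n (r + 1) = orderSum n r + n (r + 1) :=
  Finset.sum_range_succ _ _

namespace IsBlowupSeq

variable {F : ℕ → MvPolynomial (Fin 2) K} {n : ℕ → ℕ}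

lemma mem_support_iff_and_orderSum_le (hF : IsBlowupSeq F n) (r : ℕ) :
    (∀ a b, expXY a b ∈ (F r).support ↔
      ∃ c, expXY a c ∈ (F 0).support ∧ r * a + c = b + orderSum n r) ∧
    ∀ a c, expXY a c ∈ (F 0).support → orderSum n r ≤ r * a + c := by
  induction r with
  | zero => simp
  | succ r ih =>
    obtain ⟨hsupp, hle⟩ := ih
    have hstep := mem_support_iff_of_mul_X_one_pow_eq_blowup (hF r).2
    have hmin := (hF r).1
    rw [orderSum_succ]
    refine ⟨fun a b => ?_, fun a c hc => ?_⟩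
    · rw [hstep]
      constructor
      · rintro ⟨c', hc', he⟩
        obtain ⟨c, hc, he'⟩ := (hsupp a c').mp hc'
        exact ⟨c, hc, by rw [add_one_mul]; omega⟩
      · rintro ⟨c, hc, he⟩
        have := hle a c hc
        exact ⟨r * a + c - orderSum n r, (hsupp a _).mpr ⟨c, hc, by omega⟩,
          by rw [add_one_mul] at he; omega⟩
    · have := hle a c hc
      have hmem := (hsupp a (r * a + c - orderSum n r)).mpr ⟨c, hc, by omega⟩
      have := hmin.2 ⟨_, hmem, rfl⟩
      rw [degree_expXY] at this
      rw [add_one_mul]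
      omega

lemma mem_support_iff (hF : IsBlowupSeq F n) (r a b : ℕ) :
    expXY a b ∈ (F r).support ↔
      ∃ c, expXY a c ∈ (F 0).support ∧ r * a + c = b + orderSum n r :=
  (hF.mem_support_iff_and_orderSum_le r).1 a b

lemma orderSum_le (hF : IsBlowupSeq F n) (r : ℕ) {a c : ℕ}
    (h : expXY a c ∈ (F 0).support) : orderSum n r ≤ r * a + c :=
  (hF.mem_support_iff_and_orderSum_le r).2 a c h

lemma exists_orderSum_eq (hF : IsBlowupSeq F n) (r : ℕ) :
    ∃ a c, expXY a c ∈ (F 0).support ∧ (r + 1) * a + c = orderSum n (r + 1) := by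
  obtain ⟨s, hs, hdeg⟩ := (hF r).1.1
  rw [← expXY_apply_zero_apply_one s, hF.mem_support_iff] at hs
  obtain ⟨c, hc, he⟩ := hs
  refine ⟨s 0, c, hc, ?_⟩
  rw [← expXY_apply_zero_apply_one s, degree_expXY] at hdeg
  rw [orderSum_succ, add_one_mul]
  omega

lemma coeff_tangentCone_ne_zero_iff (hF : IsBlowupSeq F n) (r a ℓ : ℕ) :
    coeff (expXY a ℓ) (tangentCone (F r)) ≠ 0 ↔
      a + ℓ = n (r + 1) ∧
        ∃ c, expXY a c ∈ (F 0).support ∧ (r + 1) * a + c = orderSum n (r + 1) := by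
  have hmin : minMonomialDeg (F r) = n (r + 1) := (hF r).1.csInf_eq
  rw [tangentCone, hmin, coeff_homogeneousComponent, degree_expXY]
  split_ifs with hdeg
  · rw [← MvPolynomial.mem_support_iff, hF.mem_support_iff, orderSum_succ]
    simp only [hdeg, true_and, add_one_mul]
    refine exists_congr fun c => and_congr_right fun _ => ?_
    omega
  · simp [hdeg]

lemma le_order_and_order_succ_le (hF : IsBlowupSeq F n) {r a c : ℕ}
    (h : expXY a c ∈ (F 0).support) (he : (r + 1) * a + c = orderSum n (r + 1)) :
    a ≤ n (r + 1) ∧ n (r + 2) ≤ a := by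
  have hr := hF.orderSum_le r h
  have hr2 : orderSum n (r + 1) + n (r + 2) ≤ (r + 2) * a + c :=
    (orderSum_succ n (r + 1)).symm.trans_le (hF.orderSum_le (r + 2) h)
  have := orderSum_succ n r
  constructor <;> linarith

lemma antitone_order (hF : IsBlowupSeq F n) : Antitone fun r => n (r + 1) := by
  refine antitone_nat_of_succ_le fun r => ?_
  obtain ⟨a, c, h, he⟩ := hF.exists_orderSum_eq r
  have := hF.le_order_and_order_succ_le h he
  exact this.2.trans this.1

end IsBlowupSeq

def HasTwoPowRows (P : MvPolynomial (Fin 2) K) (d : ℕ) : Prop :=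
  ∀ a c, 0 < a → expXY a c ∈ P.support →
    ∃ z m, expXY (2 ^ z) c ∈ P.support ∧ 2 ^ z ≤ a ∧ c + 2 ^ z * m = d

namespace IsBlowupSeq

variable {F : ℕ → MvPolynomial (Fin 2) K} {n : ℕ → ℕ}

lemma exists_two_pow_orderSum_eq (hF : IsBlowupSeq F n) {d : ℕ} (hrow : HasTwoPowRows (F 0) d)
    {r : ℕ} (hX : X 0 ∣ tangentCone (F r)) :
    ∃ z c m, expXY (2 ^ z) c ∈ (F 0).support ∧ (r + 1) * 2 ^ z + c = orderSum n (r + 1) ∧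
      c + 2 ^ z * m = d := by
  obtain ⟨a, c, h, he⟩ := hF.exists_orderSum_eq r
  have ha : 0 < a := by
    refine Nat.pos_of_ne_zero fun ha0 => ?_
    subst ha0
    exact (hF.coeff_tangentCone_ne_zero_iff r 0 (n (r + 1))).mpr ⟨zero_add _, c, h, he⟩
      (coeff_expXY_zero_eq_zero_of_X_zero_dvd hX _)
  obtain ⟨z, m, hz, hza, hd⟩ := hrow a c ha h
  refine ⟨z, c, m, hz, le_antisymm ?_ (hF.orderSum_le (r + 1) hz), hd⟩
  rw [← he]
  gcongr

variable {t u : ℕ}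

lemma two_pow_le_order (hF : IsBlowupSeq F n)
    (hu : IsLeast {u' | ∃ ℓ, coeff (expXY (2 ^ u') ℓ) (tangentCone (F t)) ≠ 0} u) :
    2 ^ u ≤ n (t + 1) := by
  obtain ⟨ℓ, hℓ⟩ := hu.1
  have := ((hF.coeff_tangentCone_ne_zero_iff t _ ℓ).mp hℓ).1
  omega

lemma le_of_two_pow_orderSum_eq (hF : IsBlowupSeq F n)
    (hu : IsLeast {u' | ∃ ℓ, coeff (expXY (2 ^ u') ℓ) (tangentCone (F t)) ≠ 0} u)
    {r z c : ℕ} (hr : r ≤ t) (hz : expXY (2 ^ z) c ∈ (F 0).support)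
    (he : (r + 1) * 2 ^ z + c = orderSum n (r + 1)) : u ≤ z := by
  obtain ⟨hle, hsucc⟩ := hF.le_order_and_order_succ_le hz he
  rcases hr.lt_or_eq with hrt | rfl
  · have := (hF.two_pow_le_order hu).trans (hF.antitone_order (show r + 1 ≤ t by omega))
    exact (Nat.pow_le_pow_iff_right one_lt_two).mp (this.trans hsucc)
  · exact hu.2 ⟨n (r + 1) - 2 ^ z,
      (hF.coeff_tangentCone_ne_zero_iff r _ _).mpr ⟨by omega, c, hz, he⟩⟩

lemma two_pow_dvd_of_hasTwoPowRows (hF : IsBlowupSeq F n)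
    (hu : IsLeast {u' | ∃ ℓ, coeff (expXY (2 ^ u') ℓ) (tangentCone (F t)) ≠ 0} u)
    {d : ℕ} (hrow : HasTwoPowRows (F 0) d) {a : ℕ} (ha : 0 < a)
    (h : expXY a 0 ∈ (F 0).support) : 2 ^ u ∣ d := by
  obtain ⟨z, m, hz, -, hd⟩ := hrow a 0 ha h
  have h1 : n 1 ≤ 2 ^ z := by simpa [orderSum] using hF.orderSum_le 1 hz
  have := (hF.two_pow_le_order hu).trans ((hF.antitone_order (Nat.zero_le t)).trans h1)
  rw [← hd, zero_add]
  exact Dvd.dvd.mul_right (Nat.pow_dvd_pow 2 ((Nat.pow_le_pow_iff_right one_lt_two).mp this)) m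

lemma two_pow_dvd_orderSum (hF : IsBlowupSeq F n)
    (hu : IsLeast {u' | ∃ ℓ, coeff (expXY (2 ^ u') ℓ) (tangentCone (F t)) ≠ 0} u)
    {d : ℕ} (hrow : HasTwoPowRows (F 0) d) (hd : 2 ^ u ∣ d)
    (hX : ∀ s ≤ t, X 0 ∣ tangentCone (F s)) {r : ℕ} (hr : r ≤ t + 1) :
    2 ^ u ∣ orderSum n r := by
  rcases r with _ | r
  · simp
  obtain ⟨z, c, m, hz, he, hcd⟩ := hF.exists_two_pow_orderSum_eq hrow (hX r (by omega))
  have hu_z : 2 ^ u ∣ 2 ^ z := Nat.pow_dvd_pow 2 (hF.le_of_two_pow_orderSum_eq hu (by omega) hz he)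
  have hc : 2 ^ u ∣ c := (Nat.dvd_add_left (hu_z.mul_right m)).mp (hcd ▸ hd)
  exact he ▸ dvd_add (hu_z.mul_left _) hc

end IsBlowupSeq

end BlowupSeq

section PlanarityCurve

variable {K : Type*} [Field K]

/-- The polynomial `F` of the statement, with `A i` in place of the coefficient `A_i` of `f`. -/
def planarityCurve (d : ℕ) (A : ℕ → K) : MvPolynomial (Fin 2) K :=
  X 1 ^ (d - 2) + ∑ i ∈ Finset.Icc 3 d, C (A i) * X 1 ^ (d - i) *
    ∑ k ∈ Finset.range i, C ((((i - 1).choose k + 1 : ℕ) : K)) * X 0 ^ k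

lemma coeff_planarityCurve (d : ℕ) (A : ℕ → K) {a : ℕ} (ha : 0 < a) (c : ℕ) :
    coeff (expXY a c) (planarityCurve d A) = ∑ i ∈ Finset.Icc 3 d,
      if a < i ∧ c = d - i then A i * (((i - 1).choose a + 1 : ℕ) : K) else 0 := by
  classical
  have hmono : ∀ i k, C (A i) * X 1 ^ (d - i) * (C ((((i - 1).choose k + 1 : ℕ) : K)) * X 0 ^ k)
      = monomial (expXY k (d - i)) (A i * (((i - 1).choose k + 1 : ℕ) : K)) := by
    intro i k
    rw [C_mul_X_pow_eq_monomial, C_mul_X_pow_eq_monomial, monomial_mul, expXY, add_comm]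
  have hY : coeff (expXY a c) (X 1 ^ (d - 2) : MvPolynomial (Fin 2) K) = 0 := by
    rw [X_pow_eq_monomial, show Finsupp.single 1 (d - 2) = expXY 0 (d - 2) by simp [expXY],
      coeff_monomial, if_neg (by simp; omega)]
  rw [planarityCurve, coeff_add, hY, zero_add, coeff_sum]
  refine Finset.sum_congr rfl fun i _ => ?_
  simp only [Finset.mul_sum, hmono, coeff_sum, coeff_monomial, expXY_inj]
  by_cases hc : c = d - i
  · simp [hc, Finset.sum_ite_eq']
  · simp [hc, Ne.symm hc]

lemma mem_support_planarityCurve [CharP K 2] (d : ℕ) (A : ℕ → K) {a : ℕ} (ha : 0 < a) (c : ℕ) :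
    expXY a c ∈ (planarityCurve d A).support ↔
      ∃ i ∈ Finset.Icc 3 d, a < i ∧ c = d - i ∧ A i ≠ 0 ∧ 2 ∣ (i - 1).choose a := by
  have hcast : ∀ i, (((i - 1).choose a + 1 : ℕ) : K) ≠ 0 ↔ 2 ∣ (i - 1).choose a := by
    intro i
    rw [Ne, CharP.cast_eq_zero_iff K 2]
    omega
  rw [MvPolynomial.mem_support_iff, coeff_planarityCurve d A ha]
  constructor
  · intro hne
    obtain ⟨i, hi, hterm⟩ := Finset.exists_ne_zero_of_sum_ne_zero hne
    split_ifs at hterm with hic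
    · exact ⟨i, hi, hic.1, hic.2, left_ne_zero_of_mul hterm,
        (hcast i).mp (right_ne_zero_of_mul hterm)⟩
    · exact absurd rfl hterm
  · rintro ⟨i, hi, hai, rfl, hA, hch⟩
    rw [Finset.sum_eq_single_of_mem i hi fun j hj hji => if_neg ?_, if_pos ⟨hai, rfl⟩]
    · exact mul_ne_zero hA ((hcast i).mpr hch)
    · rintro ⟨-, hdj⟩
      rw [Finset.mem_Icc] at hi hj
      omega

variable [CharP K 2] {d : ℕ} {A : ℕ → K}

lemma two_pow_mem_support_planarityCurve (hA2 : ∀ k, A (2 ^ k) = 0) {i z m : ℕ}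
    (hi : i ∈ Finset.Icc 3 d) (hAi : A i ≠ 0) (hm : Odd m) (hizm : i = 2 ^ z * m) :
    expXY (2 ^ z) (d - i) ∈ (planarityCurve d A).support := by
  have hm3 : 3 ≤ m := by
    obtain ⟨j, rfl⟩ := hm
    rcases j with _ | j
    · exact absurd (by simpa [hizm] using hA2 z) hAi
    · omega
  have hlt : 2 ^ z < i := hizm ▸ lt_mul_of_one_lt_right (Nat.two_pow_pos z) (by omega)
  refine (mem_support_planarityCurve d A (Nat.two_pow_pos z) _).mpr ⟨i, hi, hlt, rfl, hAi, ?_⟩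
  rw [hizm]
  exact Nat.two_dvd_choose_two_pow_mul_odd_sub_one hm

lemma hasTwoPowRows_planarityCurve (hA2 : ∀ k, A (2 ^ k) = 0) :
    HasTwoPowRows (planarityCurve d A) d := by
  intro a c ha h
  obtain ⟨i, hi, -, rfl, hAi, hch⟩ := (mem_support_planarityCurve d A ha c).mp h
  have hid := Finset.mem_Icc.mp hi
  obtain ⟨z, m, hm, hizm⟩ := Nat.exists_eq_two_pow_mul_odd (show i ≠ 0 by omega)
  refine ⟨z, m, two_pow_mem_support_planarityCurve hA2 hi hAi hm hizm, ?_, by rw [← hizm]; omega⟩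
  by_contra! hlt
  rw [hizm] at hch
  exact Nat.not_two_dvd_choose_two_pow_mul_odd_sub_one hm hlt hch

lemma exists_expXY_zero_mem_support_planarityCurve (hA2 : ∀ k, A (2 ^ k) = 0) (hd : 3 ≤ d)
    (hAd : A d ≠ 0) : ∃ a, 0 < a ∧ expXY a 0 ∈ (planarityCurve d A).support := by
  obtain ⟨z, m, hm, hdzm⟩ := Nat.exists_eq_two_pow_mul_odd (show d ≠ 0 by omega)
  have h := two_pow_mem_support_planarityCurve hA2 (Finset.mem_Icc.mpr ⟨hd, le_rfl⟩) hAd hm hdzm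
  exact ⟨2 ^ z, Nat.two_pow_pos z, by rwa [Nat.sub_self] at h⟩

end PlanarityCurve

theorem two_pow_u_divides_nseq_general
    {K : Type*} [Field K] [Fintype K] (n : ℕ)
    (hcard : Fintype.card K = 2 ^ n)
    (f : Polynomial K) (d : ℕ) (hd3 : 3 ≤ d)
    (hAd : f.coeff d ≠ 0)
    (h2pow : ∀ i k : ℕ, i = 2 ^ k → f.coeff i = 0)
    (F : ℕ → MvPolynomial (Fin 2) K) (nseq : ℕ → ℕ)
    (hF0 : F 0 = (X 1 : MvPolynomial (Fin 2) K) ^ (d - 2) +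
      ∑ i ∈ Finset.Icc 3 d, C (f.coeff i) * (X 1) ^ (d - i) *
        ∑ k ∈ Finset.range i, C ((((i - 1).choose k + 1 : ℕ) : K)) * (X 0) ^ k)
    (hnseq : ∀ r : ℕ, 1 ≤ r →
      IsLeast {m : ℕ | ∃ s ∈ (F (r - 1)).support, (s.sum fun _ e => e) = m} (nseq r))
    (hFr : ∀ r : ℕ, 1 ≤ r →
      F r * (X 1 : MvPolynomial (Fin 2) K) ^ (nseq r) = aeval ![X 0 * X 1, X 1] (F (r - 1)))
    (t : ℕ) (ht1 : 1 ≤ t)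
    (htleast : ∀ s : ℕ, s < t → (X 0 : MvPolynomial (Fin 2) K) ∣ tangentCone (F s))
    (u : ℕ)
    (hu : IsLeast {u' : ℕ | ∃ ℓ : ℕ,
      (tangentCone (F (t - 1))).coeff
        (Finsupp.single (0 : Fin 2) (2 ^ u') + Finsupp.single (1 : Fin 2) ℓ) ≠ 0} u)
    :
    ∀ r : ℕ, 1 ≤ r → r ≤ t → 2 ^ u ∣ nseq r := by
  have : CharP K 2 := charP_of_card_eq_prime_pow hcard
  have hF : IsBlowupSeq F nseq := fun r => ⟨hnseq (r + 1) r.succ_pos, hFr (r + 1) r.succ_pos⟩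
  have hA2 : ∀ k, f.coeff (2 ^ k) = 0 := fun k => h2pow _ k rfl
  have hrow : HasTwoPowRows (F 0) d := hF0 ▸ hasTwoPowRows_planarityCurve hA2
  obtain ⟨a, ha, ha0⟩ : ∃ a, 0 < a ∧ expXY a 0 ∈ (F 0).support :=
    hF0 ▸ exists_expXY_zero_mem_support_planarityCurve hA2 hd3 hAd
  obtain ⟨t, rfl⟩ : ∃ t', t = t' + 1 := ⟨t - 1, by omega⟩
  have hd : 2 ^ u ∣ d := hF.two_pow_dvd_of_hasTwoPowRows hu hrow ha ha0
  have hsum : ∀ r ≤ t + 1, 2 ^ u ∣ orderSum nseq r := fun r hr =>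
    hF.two_pow_dvd_orderSum hu hrow hd (fun s hs => htleast s (by omega)) hr
  intro r hr1 hrt
  obtain ⟨r, rfl⟩ : ∃ r', r = r' + 1 := ⟨r - 1, by omega⟩
  exact (Nat.dvd_add_right (hsum r (by omega))).mp (orderSum_succ nseq r ▸ hsum (r + 1) hrt)

theorem two_pow_u_divides_nseq
    {K : Type*} [Field K] [Fintype K] (n : ℕ) (hn : 1 ≤ n)
    (hcard : Fintype.card K = 2 ^ n)
    (f : Polynomial K) (d : ℕ) (hd : f.natDegree = d) (hd3 : 3 ≤ d)
    (hAd : f.coeff d ≠ 0)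
    (hdeg : d ^ 4 ≤ Fintype.card K)
    (h2pow : ∀ i k : ℕ, i = 2 ^ k → f.coeff i = 0)
    (hplanar : ∀ ε : K, ε ≠ 0 →
      Function.Bijective fun x : K => f.eval (x + ε) + f.eval x + ε * x)
    (F : ℕ → MvPolynomial (Fin 2) K) (nseq : ℕ → ℕ)
    (hF0 : F 0 = (X 1 : MvPolynomial (Fin 2) K) ^ (d - 2) +
      ∑ i ∈ Finset.Icc 3 d, C (f.coeff i) * (X 1) ^ (d - i) *
        ∑ k ∈ Finset.range i, C ((((i - 1).choose k + 1 : ℕ) : K)) * (X 0) ^ k)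
    (hnseq : ∀ r : ℕ, 1 ≤ r →
      IsLeast {m : ℕ | ∃ s ∈ (F (r - 1)).support, (s.sum fun _ e => e) = m} (nseq r))
    (hFr : ∀ r : ℕ, 1 ≤ r →
      F r * (X 1 : MvPolynomial (Fin 2) K) ^ (nseq r) = aeval ![X 0 * X 1, X 1] (F (r - 1)))
    (t : ℕ) (ht1 : 1 ≤ t)
    (ht : ¬ (X 0 : MvPolynomial (Fin 2) K) ∣ tangentCone (F t))
    (htleast : ∀ s : ℕ, s < t → (X 0 : MvPolynomial (Fin 2) K) ∣ tangentCone (F s))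
    (u : ℕ)
    (hu : IsLeast {u' : ℕ | ∃ ℓ : ℕ,
      (tangentCone (F (t - 1))).coeff
        (Finsupp.single (0 : Fin 2) (2 ^ u') + Finsupp.single (1 : Fin 2) ℓ) ≠ 0} u)
    :
    ∀ r : ℕ, 1 ≤ r → r ≤ t → 2 ^ u ∣ nseq r :=
  two_pow_u_divides_nseq_general n hcard f d hd3 hAd h2pow F nseq hF0 hnseq hFr t ht1 htleast u hu
end
end

section
/- Let q be a power of 2 and f ∈ F_q[X]. Then f is planar on F_q if and only if for all x, y, z ∈ F_q with x ≠ y and x ≠ z one has f(x) + f(y) + f(z) + f(x+y+z) ≠ (x+y)(x+z). -/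
/-!
In characteristic 2 the difference of the values of `x ↦ f(x+ε) + f(x) + εx` at `x` and `z`,
taken with `ε = x + y`, is `f(x) + f(y) + f(z) + f(x+y+z) + (x+y)(x+z)`. So a collision `x ≠ z`
of this map is the same thing as a triple violating the surface condition, and on a finite
field injectivity is bijectivity.
-/

open Function

def planarDifference {R : Type*} [Ring R] (g : R → R) (ε x : R) : R :=
  g (x + ε) + g x + ε * x

section CharTwo

variable {R : Type*} [Ring R] [CharP R 2] (g : R → R)

theorem planarDifference_add_planarDifference (x y z : R) :
    planarDifference g (x + y) x + planarDifference g (x + y) z =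
      g x + g y + g z + g (x + y + z) + (x + y) * (x + z) := by
  rw [planarDifference, planarDifference, CharTwo.add_cancel_left, add_comm z, mul_add]
  abel

theorem planarDifference_eq_iff (x y z : R) :
    planarDifference g (x + y) x = planarDifference g (x + y) z ↔
      g x + g y + g z + g (x + y + z) = (x + y) * (x + z) := by
  rw [← CharTwo.add_eq_zero, planarDifference_add_planarDifference, CharTwo.add_eq_zero]

theorem injective_planarDifference_iff :
    (∀ ε : R, ε ≠ 0 → Injective (planarDifference g ε)) ↔
      ∀ x y z : R, x ≠ y → x ≠ z → g x + g y + g z + g (x + y + z) ≠ (x + y) * (x + z) := by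
  constructor
  · intro hinj x y z hxy hxz hsurface
    have hε : x + y ≠ 0 := fun h ↦ hxy (CharTwo.add_eq_zero.mp h)
    exact hxz (hinj (x + y) hε ((planarDifference_eq_iff g x y z).mpr hsurface))
  · intro hsurface ε hε a b hab
    by_contra hne
    have hshift : a ≠ a + ε := fun h ↦ hε (by simpa using h)
    refine hsurface a (a + ε) b hshift hne ((planarDifference_eq_iff g a (a + ε) b).mp ?_)
    rwa [CharTwo.add_cancel_left]

end CharTwo

theorem planar_iff_surface_condition_general
    {K : Type*} [Field K] [Fintype K] (n : ℕ)
    (hcard : Fintype.card K = 2 ^ n)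
    (f : Polynomial K) :
    (∀ ε : K, ε ≠ 0 →
      Function.Bijective fun x : K => f.eval (x + ε) + f.eval x + ε * x) ↔
    ∀ x y z : K, x ≠ y → x ≠ z →
      f.eval x + f.eval y + f.eval z + f.eval (x + y + z) ≠ (x + y) * (x + z) := by
  have : CharP K 2 := charP_of_card_eq_prime_pow hcard
  simp only [← Finite.injective_iff_bijective]
  exact injective_planarDifference_iff f.eval

theorem planar_iff_surface_condition
    {K : Type*} [Field K] [Fintype K] (n : ℕ) (hn : 1 ≤ n)
    (hcard : Fintype.card K = 2 ^ n)
    (f : Polynomial K) :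
    (∀ ε : K, ε ≠ 0 →
      Function.Bijective fun x : K => f.eval (x + ε) + f.eval x + ε * x) ↔
    ∀ x y z : K, x ≠ y → x ≠ z →
      f.eval x + f.eval y + f.eval z + f.eval (x + y + z) ≠ (x + y) * (x + z) :=
  planar_iff_surface_condition_general n hcard f
end

section
/- Let q be a power of 2 and let f = Σ_{i=0}^d A_i X^i ∈ F_q[X] with A_d ≠ 0 and d ≥ 3. If f is planar on F_q, then every point (x,y) ∈ F_q × F_q with F(x,y) = 0 satisfies x = 1 or y = 0, where F is the associated polynomial. -/
/-!
Write `D(a, b) = f(a + b) + f(a) + f(b) + f(0)`. Planarity says that for `a ≠ 0` the map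
`x ↦ f(x + a) + f(x) + a x` is injective; comparing its values at `b` and `0` shows that in
characteristic 2 the equation `D(a, b) = a b` forces `b = 0`. On the other hand, with
`a = (x + 1)/y` and `b = 1/y`, the inner sums `S_i(x) = ∑_k (binom(i-1, k) + 1) x^k` of `F` satisfy
`(x + 1) S_i(x) = (x + 1)^i + x^i + 1`, whence `(x + 1) F(x, y) = y^d (D(a, b) + a b)`. So a zero
of `F` with `x ≠ 1` and `y ≠ 0` would give a solution of `D(a, b) = a b` with `a, b ≠ 0`.
-/

open MvPolynomial

section CommRing

variable {R : Type*} [CommRing R]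

noncomputable def associatedPoly (f : Polynomial R) (d : ℕ) : MvPolynomial (Fin 2) R :=
  (X 1 : MvPolynomial (Fin 2) R) ^ (d - 2) +
    ∑ i ∈ Finset.Icc 3 d, C (f.coeff i) * (X 1) ^ (d - i) *
      ∑ k ∈ Finset.range i, C ((((i - 1).choose k + 1 : ℕ) : R)) * (X 0) ^ k

lemma eval_associatedPoly (f : Polynomial R) (d : ℕ) (x y : R) :
    eval ![x, y] (associatedPoly f d) = y ^ (d - 2) +
      ∑ i ∈ Finset.Icc 3 d, f.coeff i * y ^ (d - i) *
        ∑ k ∈ Finset.range i, ((((i - 1).choose k + 1 : ℕ) : R)) * x ^ k := by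
  simp [associatedPoly]

section CharTwo

variable [CharP R 2]

lemma CharTwo.mul_sum_choose_add_one (x : R) {i : ℕ} (hi : 1 ≤ i) :
    (x + 1) * ∑ k ∈ Finset.range i, ((((i - 1).choose k + 1 : ℕ) : R)) * x ^ k
      = (x + 1) ^ i + x ^ i + 1 := by
  have hbinom : (x + 1) * ∑ k ∈ Finset.range i, (((i - 1).choose k : ℕ) : R) * x ^ k
      = (x + 1) ^ i := by
    obtain ⟨j, rfl⟩ := Nat.exists_eq_add_of_le' hi
    rw [Nat.add_sub_cancel, pow_succ', add_pow]
    exact congrArg _ (Finset.sum_congr rfl fun k _ => by rw [one_pow, mul_one, mul_comm])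
  have hgeom : (x + 1) * ∑ k ∈ Finset.range i, x ^ k = x ^ i + 1 := by
    rw [← CharTwo.sub_eq_add, ← CharTwo.sub_eq_add, mul_geom_sum]
  simp only [Nat.cast_add, Nat.cast_one, add_mul, one_mul, Finset.sum_add_distrib, mul_add,
    hbinom, hgeom, add_assoc]

lemma CharTwo.eval_add_add_eval_add_eval_add_eval_zero (f : Polynomial R) {d : ℕ}
    (hd : f.natDegree ≤ d) (a b : R) :
    f.eval (a + b) + f.eval a + f.eval b + f.eval 0
      = ∑ i ∈ Finset.Icc 3 d, f.coeff i * ((a + b) ^ i + a ^ i + b ^ i) := by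
  have hlt : f.natDegree < d + 1 := Nat.lt_succ_of_le hd
  simp only [Polynomial.eval_eq_sum_range' hlt, ← Finset.sum_add_distrib]
  calc _ = ∑ i ∈ Finset.Icc 3 d, (f.coeff i * (a + b) ^ i + f.coeff i * a ^ i
          + f.coeff i * b ^ i + f.coeff i * (0 : R) ^ i) := by
        refine (Finset.sum_subset (fun i hi => ?_) fun i hid hi => ?_).symm
        · simp only [Finset.mem_Icc, Finset.mem_range] at hi ⊢; omega
        · have hi3 : i < 3 := by
            simp only [Finset.mem_Icc, Finset.mem_range, not_and_or] at hi hid; omega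
          have h2 : (2 : R) = 0 := CharTwo.two_eq_zero
          interval_cases i
          · linear_combination (f.coeff 0 * 2) * h2
          · linear_combination (f.coeff 1 * (a + b)) * h2
          · linear_combination (f.coeff 2 * (a ^ 2 + b ^ 2 + a * b)) * h2
    _ = _ := Finset.sum_congr rfl fun i hi => by
        rw [zero_pow (by simp only [Finset.mem_Icc] at hi; omega)]; ring

lemma CharTwo.add_add_add_ne_mul_of_injective {g : R → R} {ε δ : R}
    (hinj : Function.Injective fun x => g (x + ε) + g x + ε * x) (hδ : δ ≠ 0) :
    g (ε + δ) + g ε + g δ + g 0 ≠ ε * δ := by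
  intro h
  refine hδ (hinj ?_)
  change g (δ + ε) + g δ + ε * δ = g (0 + ε) + g 0 + ε * 0
  rw [add_comm δ ε, zero_add, mul_zero, add_zero, ← h]
  linear_combination (g (ε + δ) + g δ) * (CharTwo.two_eq_zero : (2 : R) = 0)

end CharTwo

end CommRing

section Field

variable {K : Type*} [Field K] [CharP K 2]

lemma CharTwo.mul_eval_associatedPoly (f : Polynomial K) {d : ℕ} (hd : f.natDegree ≤ d)
    (h2d : 2 ≤ d) (x : K) {y : K} (hy : y ≠ 0) :
    (x + 1) * eval ![x, y] (associatedPoly f d) = y ^ d *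
      (f.eval ((x + 1) / y + 1 / y) + f.eval ((x + 1) / y) + f.eval (1 / y) + f.eval 0
        + (x + 1) / y * (1 / y)) := by
  have hab : (x + 1) / y + 1 / y = x / y := by
    rw [← add_div, add_assoc, CharTwo.add_self_eq_zero, add_zero]
  rw [eval_associatedPoly, CharTwo.eval_add_add_eval_add_eval_add_eval_zero f hd, hab, mul_add,
    mul_add, Finset.mul_sum, Finset.mul_sum, pow_sub₀ y hy h2d, add_comm (∑ i ∈ _, _)]
  congr 1
  · field_simp
  · refine Finset.sum_congr rfl fun i hi => ?_
    rw [pow_sub₀ y hy (Finset.mem_Icc.mp hi).2, mul_left_comm, mul_assoc, mul_assoc,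
      CharTwo.mul_sum_choose_add_one x (by simp only [Finset.mem_Icc] at hi; omega),
      div_pow, div_pow, div_pow, one_pow]
    field_simp
    ring

end Field

theorem planar_rational_points_of_F_general
    {K : Type*} [Field K] [Fintype K] (n : ℕ)
    (hcard : Fintype.card K = 2 ^ n)
    (f : Polynomial K) (d : ℕ) (hd : f.natDegree = d) (hd3 : 3 ≤ d)
    (F : MvPolynomial (Fin 2) K)
    (hF : F = (X 1 : MvPolynomial (Fin 2) K) ^ (d - 2) +
      ∑ i ∈ Finset.Icc 3 d, C (f.coeff i) * (X 1) ^ (d - i) *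
        ∑ k ∈ Finset.range i, C ((((i - 1).choose k + 1 : ℕ) : K)) * (X 0) ^ k)
    (hplanar : ∀ ε : K, ε ≠ 0 →
      Function.Bijective fun x : K => f.eval (x + ε) + f.eval x + ε * x) :
    ∀ x y : K, eval ![x, y] F = 0 → x = 1 ∨ y = 0 := by
  have : CharP K 2 := charP_of_card_eq_prime_pow hcard
  intro x y hxy
  by_contra! ⟨hx, hy⟩
  have ha : (x + 1) / y ≠ 0 := div_ne_zero (by rwa [ne_eq, CharTwo.add_eq_zero]) hy
  have hD := CharTwo.mul_eval_associatedPoly f hd.le (by omega) x hy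
  rw [← show F = associatedPoly f d from hF, hxy, mul_zero, eq_comm,
    mul_eq_zero_iff_left (pow_ne_zero d hy), CharTwo.add_eq_zero] at hD
  exact CharTwo.add_add_add_ne_mul_of_injective (g := (Polynomial.eval · f))
    (hplanar _ ha).injective (one_div_ne_zero hy) hD

theorem planar_rational_points_of_F
    {K : Type*} [Field K] [Fintype K] (n : ℕ) (hn : 1 ≤ n)
    (hcard : Fintype.card K = 2 ^ n)
    (f : Polynomial K) (d : ℕ) (hd : f.natDegree = d) (hd3 : 3 ≤ d)
    (hAd : f.coeff d ≠ 0)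
    (F : MvPolynomial (Fin 2) K)
    (hF : F = (X 1 : MvPolynomial (Fin 2) K) ^ (d - 2) +
      ∑ i ∈ Finset.Icc 3 d, C (f.coeff i) * (X 1) ^ (d - i) *
        ∑ k ∈ Finset.range i, C ((((i - 1).choose k + 1 : ℕ) : K)) * (X 0) ^ k)
    (hplanar : ∀ ε : K, ε ≠ 0 →
      Function.Bijective fun x : K => f.eval (x + ε) + f.eval x + ε * x) :
    ∀ x y : K, eval ![x, y] F = 0 → x = 1 ∨ y = 0 :=
  planar_rational_points_of_F_general n hcard f d hd hd3 F hF hplanar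
end

section
/- Let i ≥ 2 be a natural number that is not a power of two. Then the least natural number k ≥ 0 such that the binomial coefficient binom(i-1, k) is even equals 2^{v₂(i)}, where v₂(i) denotes the 2-adic valuation of i. -/
/-!
Write i = 2^v m with m odd. Then i - 1 = 2^(v+1) (m - 1)/2 + (2^v - 1), so the binary digits of
i - 1 below position v are all 1 and its digit v is 0. By Lucas' theorem, binom(i - 1, k) is then
odd for every k < 2^v, while binom(i - 1, 2^v) ≡ binom(2^v - 1, 2^v) = 0 (mod 2).
-/

theorem Choose.choose_modEq_choose_mod_pow_mul_choose_div_pow_nat {p : ℕ} [Fact p.Prime]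
    (a n k : ℕ) :
    n.choose k ≡ (n % p ^ a).choose (k % p ^ a) * (n / p ^ a).choose (k / p ^ a) [MOD p] := by
  induction a generalizing n k with
  | zero => simp only [pow_zero, Nat.mod_one, Nat.div_one, Nat.choose_self, one_mul]; rfl
  | succ a ih =>
    have digits (m : ℕ) :
        m % p ^ (a + 1) % p = m % p ∧ m % p ^ (a + 1) / p = m / p % p ^ a := by
      rw [pow_succ', Nat.mod_mul_right_mod, Nat.mod_mul_right_div_self]
      exact ⟨rfl, rfl⟩
    have lucas_low := Choose.choose_modEq_choose_mod_mul_choose_div_nat (p := p)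
      (n := n % p ^ (a + 1)) (k := k % p ^ (a + 1))
    rw [(digits n).1, (digits n).2, (digits k).1, (digits k).2] at lucas_low
    calc n.choose k
        ≡ (n % p).choose (k % p) * (n / p).choose (k / p) [MOD p] :=
          Choose.choose_modEq_choose_mod_mul_choose_div_nat
      _ ≡ (n % p).choose (k % p) * ((n / p % p ^ a).choose (k / p % p ^ a) *
            (n / p / p ^ a).choose (k / p / p ^ a)) [MOD p] := (ih _ _).mul_left _
      _ ≡ (n % p ^ (a + 1)).choose (k % p ^ (a + 1)) * (n / p ^ (a + 1)).choose (k / p ^ (a + 1))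
            [MOD p] := by
          rw [← mul_assoc, Nat.div_div_eq_div_mul, Nat.div_div_eq_div_mul, ← pow_succ']
          exact lucas_low.symm.mul_right _

theorem odd_choose_two_pow_sub_one {t k : ℕ} (hk : k < 2 ^ t) : Odd ((2 ^ t - 1).choose k) := by
  have : Fact (Nat.Prime 2) := ⟨Nat.prime_two⟩
  have digit_eq_one {i : ℕ} (hi : i < t) : (2 ^ t - 1) / 2 ^ i % 2 = 1 := by
    have h := Nat.testBit_two_pow_sub_one t i
    rw [Nat.testBit_eq_decide_div_mod_eq, decide_eq_decide] at h
    exact h.mpr hi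
  have lucas := Choose.choose_modEq_prod_range_choose_nat (p := 2)
    (Nat.sub_lt (by positivity) one_pos) hk
  rw [Finset.prod_eq_one fun i hi => by
    rw [digit_eq_one (Finset.mem_range.mp hi), Nat.choose_eq_one_iff]; omega] at lucas
  exact Nat.odd_iff.mpr lucas

theorem isLeast_even_choose_of_mod_two_pow_succ {n t : ℕ} (hn : n % 2 ^ (t + 1) = 2 ^ t - 1) :
    IsLeast {k | Even (n.choose k)} (2 ^ t) := by
  have : Fact (Nat.Prime 2) := ⟨Nat.prime_two⟩
  have ht : 2 ^ t - 1 < 2 ^ t := Nat.sub_lt (by positivity) one_pos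
  constructor
  · have lucas :=
      Choose.choose_modEq_choose_mod_pow_mul_choose_div_pow_nat (p := 2) (t + 1) n (2 ^ t)
    rw [hn, Nat.mod_eq_of_lt (Nat.pow_lt_pow_succ one_lt_two), Nat.choose_eq_zero_of_lt ht,
      zero_mul] at lucas
    exact Nat.even_iff.mpr lucas
  · intro k (hk : Even (n.choose k))
    by_contra! hk_lt
    have hn_low : n % 2 ^ t = 2 ^ t - 1 := by
      rw [← Nat.mod_mod_of_dvd n (pow_dvd_pow 2 t.le_succ), hn, Nat.mod_eq_of_lt ht]
    have lucas := Choose.choose_modEq_choose_mod_pow_mul_choose_div_pow_nat (p := 2) t n k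
    rw [Nat.ModEq, hn_low, Nat.mod_eq_of_lt hk_lt, Nat.div_eq_of_lt hk_lt, Nat.choose_zero_right,
      mul_one] at lucas
    rw [Nat.even_iff, lucas] at hk
    have := Nat.odd_iff.mp (odd_choose_two_pow_sub_one hk_lt)
    omega

theorem sub_one_mod_two_pow_padicValNat_succ (i : ℕ) :
    (i - 1) % 2 ^ (padicValNat 2 i + 1) = 2 ^ padicValNat 2 i - 1 := by
  rcases eq_or_ne i 0 with rfl | hi
  · simp
  set v := padicValNat 2 i
  obtain ⟨m, hm⟩ : 2 ^ v ∣ i := pow_padicValNat_dvd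
  have hm_odd : m % 2 = 1 := Nat.two_dvd_ne_zero.mp fun ⟨c, hc⟩ =>
    pow_succ_padicValNat_not_dvd (p := 2) hi ⟨c, by rw [pow_succ, mul_assoc, ← hc, ← hm]⟩
  have hi_eq : i = 2 ^ (v + 1) * (m / 2) + 2 ^ v := by
    rw [hm, pow_succ]; nth_rw 1 [← Nat.div_add_mod m 2, hm_odd]; ring
  have hv : 0 < 2 ^ v := by positivity
  rw [show i - 1 = 2 ^ (v + 1) * (m / 2) + (2 ^ v - 1) by omega, Nat.mul_add_mod,
    Nat.mod_eq_of_lt (by rw [pow_succ]; omega)]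

theorem least_even_binomial_eq_two_pow_val_general
    (i : ℕ) :
    IsLeast {k : ℕ | Even ((i - 1).choose k)} (2 ^ padicValNat 2 i) :=
  isLeast_even_choose_of_mod_two_pow_succ (sub_one_mod_two_pow_padicValNat_succ i)

theorem least_even_binomial_eq_two_pow_val
    (i : ℕ) (hi : 2 ≤ i) (hnp : ∀ e : ℕ, i ≠ 2 ^ e) :
    IsLeast {k : ℕ | Even ((i - 1).choose k)} (2 ^ padicValNat 2 i) :=
  least_even_binomial_eq_two_pow_val_general i
end

section
/- Let q be a power of 2 and let f = Σ_{i=0}^d A_i X^i ∈ F_q[X] with A_d ≠ 0 and d ≥ 3. Define F ∈ F_q[X,Y] by F(X,Y) = Σ_{i=3}^d A_i Y^{d-i} Σ_{k=1}^{i-1} (binom(i-1,k)+1) X^{k-1}. If f is APN on F_q, then every point (x,y) ∈ F_q × F_q with F(x,y) = 0 satisfies x = 0, x = 1, or y = 0. -/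
/-! In characteristic 2, `x (x + 1)` times the inner sum of `F` at index `i` equals
`(x + 1)^i + x^i + 1` (a binomial expansion plus a geometric sum). Hence, for `y ≠ 0`,
`x (x + 1) F(x, y) = y^d (f(u + ε) + f(u) + f(ε) + f(0))` with `ε = 1/y`, `u = x/y`. A zero of `F`
therefore makes `0, ε, u, u + ε` solutions of `f(z + ε) + f(z) = f(ε) + f(0)`, and these are four
distinct points unless `x ∈ {0, 1}`, contradicting the APN property. -/

open MvPolynomial

section binomSum

variable {R : Type*} [CommRing R]

def binomSum (i : ℕ) (x : R) : R :=
  ∑ k ∈ Finset.Icc 1 (i - 1), (((i - 1).choose k + 1 : ℕ) : R) * x ^ (k - 1)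

theorem mul_binomSum_succ (j : ℕ) (x : R) :
    x * binomSum (j + 1) x = ((x + 1) ^ j - 1) + ∑ k ∈ Finset.range j, x ^ (k + 1) := by
  have hbinom : ∑ k ∈ Finset.range j, x ^ (k + 1) * (j.choose (k + 1) : R) = (x + 1) ^ j - 1 := by
    rw [add_pow, Finset.sum_range_succ']
    simp
  rw [binomSum, add_tsub_cancel_right, ← Finset.Ico_add_one_right_eq_Icc,
    Finset.sum_Ico_eq_sum_range, add_tsub_cancel_right, Finset.mul_sum, ← hbinom,
    ← Finset.sum_add_distrib]
  refine Finset.sum_congr rfl fun k _ => ?_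
  rw [add_comm 1 k, add_tsub_cancel_right]
  push_cast
  ring

variable [CharP R 2]

theorem binomSum_eq_zero_of_le_two {i : ℕ} (hi : i ≤ 2) (x : R) : binomSum i x = 0 := by
  interval_cases i <;> simp [binomSum, CharTwo.add_self_eq_zero]

-- The summand `0 ^ i` makes the identity hold also for `i = 0`, where both sides vanish.
theorem mul_add_one_mul_binomSum (i : ℕ) (x : R) :
    x * (x + 1) * binomSum i x = (x + 1) ^ i + x ^ i + 1 + 0 ^ i := by
  rcases i with _ | j
  · simp [binomSum, CharTwo.add_self_eq_zero]
  · have hgeom : (∑ k ∈ Finset.range j, x ^ (k + 1)) * (x + 1) = x ^ (j + 1) + x := by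
      simp only [pow_succ, ← Finset.sum_mul, mul_right_comm _ x, geom_sum_mul,
        ← CharTwo.sub_eq_add]
      ring
    linear_combination (x + 1) * mul_binomSum_succ j x + hgeom - CharTwo.two_eq_zero (R := R)

end binomSum

theorem pow_mul_eval_div {K : Type*} [Field K] {f : Polynomial K} {d : ℕ} (hf : f.natDegree ≤ d)
    {y : K} (hy : y ≠ 0) (z : K) :
    y ^ d * f.eval (z / y) = ∑ i ∈ Finset.range (d + 1), f.coeff i * y ^ (d - i) * z ^ i := by
  rw [Polynomial.eval_eq_sum_range' (Nat.lt_succ_of_le hf), Finset.mul_sum]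
  refine Finset.sum_congr rfl fun i hi => ?_
  rw [div_pow, ← pow_sub_mul_pow y (Nat.le_of_lt_succ (Finset.mem_range.mp hi))]
  field_simp

theorem four_le_ncard_setOf_add_eq {K M : Type*} [Ring K] [Finite K] [CharP K 2]
    [AddCommMonoid M] (f : K → M) {ε u : K} (hε : ε ≠ 0) (hu : u ≠ 0) (huε : u ≠ ε)
    (h : f (u + ε) + f u = f ε + f 0) :
    4 ≤ {z | f (z + ε) + f z = f ε + f 0}.ncard := by
  have hsub : {0, ε, u, u + ε} ⊆ {z | f (z + ε) + f z = f ε + f 0} := by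
    rintro z (rfl | rfl | rfl | rfl)
    · simp
    · simp [CharTwo.add_self_eq_zero, add_comm]
    · exact h
    · show f (u + ε + ε) + f (u + ε) = _
      rw [CharTwo.add_cancel_right, add_comm, h]
  have hcard : ({0, ε, u, u + ε} : Set K).ncard = 4 := by
    refine Set.ncard_eq_four.mpr ⟨0, ε, u, u + ε, hε.symm, hu.symm, ?_, huε.symm, ?_, ?_, rfl⟩
    · rw [ne_comm, Ne, CharTwo.add_eq_zero]; exact huε
    · simpa using hu
    · simpa using hε
  exact hcard ▸ Set.ncard_le_ncard hsub

theorem apn_rational_points_of_F_general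
    {K : Type*} [Field K] [Fintype K] (n : ℕ)
    (hcard : Fintype.card K = 2 ^ n)
    (f : Polynomial K) (d : ℕ) (hd : f.natDegree = d)
    (F : MvPolynomial (Fin 2) K)
    (hF : F = ∑ i ∈ Finset.Icc 3 d, C (f.coeff i) * (X 1 : MvPolynomial (Fin 2) K) ^ (d - i) *
        ∑ k ∈ Finset.Icc 1 (i - 1), C ((((i - 1).choose k + 1 : ℕ) : K)) * (X 0) ^ (k - 1))
    (hapn : ∀ ε : K, ε ≠ 0 → ∀ b : K,
      {x : K | f.eval (x + ε) + f.eval x = b}.ncard ≤ 2) :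
    ∀ x y : K, eval ![x, y] F = 0 → x = 0 ∨ x = 1 ∨ y = 0 := by
  have : CharP K 2 := charP_of_card_eq_prime_pow hcard
  intro x y hxy
  by_contra! ⟨hx0, hx1, hy0⟩
  have hFxy : eval ![x, y] F =
      ∑ i ∈ Finset.range (d + 1), f.coeff i * y ^ (d - i) * binomSum i x := by
    rw [hF]
    simp only [map_sum, map_mul, map_pow, eval_C, eval_X, Matrix.cons_val_zero,
      Matrix.cons_val_one, ← binomSum.eq_1]
    refine Finset.sum_subset (fun i hi => ?_) fun i hi hi' => ?_
    · simp only [Finset.mem_Icc, Finset.mem_range] at hi ⊢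
      omega
    · simp only [Finset.mem_Icc, Finset.mem_range] at hi hi'
      rw [binomSum_eq_zero_of_le_two (by omega), mul_zero]
  have hkey : y ^ d * (f.eval ((x + 1) / y) + f.eval (x / y) + f.eval (1 / y) + f.eval (0 / y))
      = x * (x + 1) * eval ![x, y] F := by
    simp only [mul_add, pow_mul_eval_div hd.le hy0, ← Finset.sum_add_distrib, hFxy,
      Finset.mul_sum]
    refine Finset.sum_congr rfl fun i _ => ?_
    rw [one_pow]
    linear_combination -f.coeff i * y ^ (d - i) * mul_add_one_mul_binomSum i x
  have hfiber : f.eval (x / y + 1 / y) + f.eval (x / y) = f.eval (1 / y) + f.eval 0 := by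
    rw [hxy, mul_zero, zero_div] at hkey
    rw [← add_div]
    linear_combination (mul_eq_zero.mp hkey).resolve_left (pow_ne_zero d hy0) -
      (f.eval (1 / y) + f.eval 0) * CharTwo.two_eq_zero (R := K)
  have h4 := four_le_ncard_setOf_add_eq (fun z => f.eval z) (one_div_ne_zero hy0)
    (div_ne_zero hx0 hy0) (by rwa [Ne, div_left_inj' hy0]) hfiber
  have := h4.trans (hapn _ (one_div_ne_zero hy0) _)
  omega

theorem apn_rational_points_of_F
    {K : Type*} [Field K] [Fintype K] (n : ℕ) (hn : 1 ≤ n)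
    (hcard : Fintype.card K = 2 ^ n)
    (f : Polynomial K) (d : ℕ) (hd : f.natDegree = d) (hd3 : 3 ≤ d)
    (hAd : f.coeff d ≠ 0)
    (F : MvPolynomial (Fin 2) K)
    (hF : F = ∑ i ∈ Finset.Icc 3 d, C (f.coeff i) * (X 1 : MvPolynomial (Fin 2) K) ^ (d - i) *
        ∑ k ∈ Finset.Icc 1 (i - 1), C ((((i - 1).choose k + 1 : ℕ) : K)) * (X 0) ^ (k - 1))
    (hapn : ∀ ε : K, ε ≠ 0 → ∀ b : K,
      {x : K | f.eval (x + ε) + f.eval x = b}.ncard ≤ 2) :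
    ∀ x y : K, eval ![x, y] F = 0 → x = 0 ∨ x = 1 ∨ y = 0 :=
  apn_rational_points_of_F_general n hcard f d hd F hF hapn
end
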